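/- The circulant graph C_{14}(1,4) is not a W₂ graph. -/

import Mathlib

/-
If `C₁₄(1,4)` were W₂, then (taking the second set empty) every independent set would extend
to a maximum one. The set `{1, 8}` is independent, and the vertices adjacent to neither `1` nor `8`
are `3, 13, 6, 10`, which form the two edges `3 ~ 13` and `6 ~ 10`; so an independent set
containing `{1, 8}` has at most `2 + 1 + 1 = 4` elements. But `{0, 2, 5, 8, 11}` is independent,
so `α(C₁₄(1,4)) ≥ 5`.
-/

open SimpleGraph

/-- The circulant graph `C_n(S)` on `ℤ/nℤ`: vertices `i, j` are adjacent iff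
`min{|i−j|, n−|i−j|} ∈ S`, i.e. iff `i − j` or `j − i` is congruent mod `n`
to an element of `S ⊆ {1, …, ⌊n/2⌋}`. -/
def circ (n : ℕ) (S : Set ℕ) : SimpleGraph (ZMod n) :=
  SimpleGraph.circulantGraph ((fun s : ℕ => (s : ZMod n)) '' S)

/-- `s` is an independent set of `G`. -/
def IsIndep {V : Type*} (G : SimpleGraph V) (s : Finset V) : Prop :=
  ∀ ⦃u⦄, u ∈ s → ∀ ⦃w⦄, w ∈ s → ¬ G.Adj u w

/-- The independence number `α(G)`. -/
noncomputable def _root_.indepNum {V : Type*} [Fintype V] (G : SimpleGraph V) : ℕ :=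
  sSup {k | ∃ s : Finset V, IsIndep G s ∧ s.card = k}

/-- `G` is a W₂ graph: it has at least two vertices and every pair of disjoint
independent sets is contained in a pair of disjoint maximum independent sets. -/
def IsW2 {V : Type*} [Fintype V] (G : SimpleGraph V) : Prop :=
  2 ≤ Fintype.card V ∧
  ∀ A B : Finset V, IsIndep G A → IsIndep G B → Disjoint A B →
    ∃ A' B' : Finset V, A ⊆ A' ∧ B ⊆ B' ∧ Disjoint A' B' ∧
      IsIndep G A' ∧ IsIndep G B' ∧ A'.card = _root_.indepNum G ∧ B'.card = _root_.indepNum G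

/-- The disjoint union of `d` copies of the graph `G`. -/
def copies {V : Type*} (d : ℕ) (G : SimpleGraph V) : SimpleGraph (Fin d × V) where
  Adj p q := p.1 = q.1 ∧ G.Adj p.2 q.2
  symm := ⟨fun p q h => ⟨h.1.symm, h.2.symm⟩⟩
  loopless := ⟨fun p h => G.irrefl h.2⟩

open Finset

section IndependentSets

variable {V : Type*} {G : SimpleGraph V}

lemma IsIndep.card_inter_pair_le_one [DecidableEq V] {s : Finset V} (hs : IsIndep G s)
    {u v : V} (huv : G.Adj u v) : (s ∩ {u, v}).card ≤ 1 := by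
  rw [card_le_one]
  intro a ha b hb
  simp only [mem_inter, mem_insert, mem_singleton] at ha hb
  obtain ⟨ha, rfl | rfl⟩ := ha <;> obtain ⟨hb, rfl | rfl⟩ := hb
  exacts [rfl, (hs ha hb huv).elim, (hs hb ha huv).elim, rfl]

variable [Fintype V]

lemma IsIndep.card_le_indepNum {s : Finset V} (hs : IsIndep G s) :
    s.card ≤ _root_.indepNum G :=
  le_csSup ⟨Fintype.card V, by rintro _ ⟨t, -, rfl⟩; exact card_le_univ t⟩ ⟨s, hs, rfl⟩

lemma IsW2.exists_superset_card_eq_indepNum (hG : IsW2 G) {s : Finset V} (hs : IsIndep G s) :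
    ∃ t, s ⊆ t ∧ IsIndep G t ∧ t.card = _root_.indepNum G := by
  obtain ⟨t, -, hst, -, -, ht, -, htcard, -⟩ :=
    hG.2 s ∅ hs (fun _ hu => absurd hu (notMem_empty _)) (disjoint_empty_right s)
  exact ⟨t, hst, ht, htcard⟩

end IndependentSets

lemma circ_14_adj_iff (i j : ZMod 14) :
    (circ 14 {1, 4}).Adj i j ↔ i - j ∈ ({1, 4, 10, 13} : Finset (ZMod 14)) := by
  rw [circ, circulantGraph_adj, ← neg_sub i j, ← sub_eq_zero (a := i)]
  generalize i - j = d
  simp only [Set.image_insert_eq, Set.image_singleton, Set.mem_insert_iff, Set.mem_singleton_iff]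
  revert d
  decide

lemma circ_14_isIndep_iff (s : Finset (ZMod 14)) :
    IsIndep (circ 14 {1, 4}) s ↔
      ∀ u ∈ s, ∀ w ∈ s, u - w ∉ ({1, 4, 10, 13} : Finset (ZMod 14)) := by
  simp only [IsIndep, circ_14_adj_iff]

lemma circ_14_isIndep_one_eight : IsIndep (circ 14 {1, 4}) {1, 8} := by
  rw [circ_14_isIndep_iff]; decide

lemma circ_14_five_le_indepNum : 5 ≤ _root_.indepNum (circ 14 {1, 4}) :=
  (circ_14_isIndep_iff {0, 2, 5, 8, 11}).2 (by decide) |>.card_le_indepNum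

lemma circ_14_mem_of_not_adj_one_of_not_adj_eight {v : ZMod 14}
    (h1 : ¬(circ 14 {1, 4}).Adj v 1) (h8 : ¬(circ 14 {1, 4}).Adj v 8) :
    v ∈ ({1, 8} ∪ {3, 13} ∪ {6, 10} : Finset (ZMod 14)) := by
  rw [circ_14_adj_iff] at h1 h8
  revert v
  decide

lemma circ_14_card_le_four {s : Finset (ZMod 14)} (hs : IsIndep (circ 14 {1, 4}) s)
    (h1 : 1 ∈ s) (h8 : 8 ∈ s) : s.card ≤ 4 := by
  have hsub : s ⊆ {1, 8} ∪ s ∩ {3, 13} ∪ s ∩ {6, 10} := by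
    intro v hv
    have hv' := circ_14_mem_of_not_adj_one_of_not_adj_eight (hs hv h1) (hs hv h8)
    simp only [mem_union, mem_inter] at hv' ⊢
    tauto
  have h3 : (s ∩ {3, 13}).card ≤ 1 :=
    hs.card_inter_pair_le_one ((circ_14_adj_iff _ _).2 (by decide))
  have h6 : (s ∩ {6, 10}).card ≤ 1 :=
    hs.card_inter_pair_le_one ((circ_14_adj_iff _ _).2 (by decide))
  calc s.card ≤ (({1, 8} : Finset (ZMod 14)) ∪ s ∩ {3, 13} ∪ s ∩ {6, 10}).card :=
        card_le_card hsub
    _ ≤ ({1, 8} : Finset (ZMod 14)).card + (s ∩ {3, 13}).card + (s ∩ {6, 10}).card :=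
      (card_union_le _ _).trans (by gcongr; exact card_union_le _ _)
    _ ≤ 2 + 1 + 1 := by gcongr; decide
    _ = 4 := rfl

theorem stmt_13 : ¬ IsW2 (circ 14 {1, 4}) := by
  intro hW
  obtain ⟨t, hst, ht, htcard⟩ := hW.exists_superset_card_eq_indepNum circ_14_isIndep_one_eight
  have hle := circ_14_card_le_four ht (hst (by simp)) (hst (by simp))
  have hge := circ_14_five_le_indepNum
  omega
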